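/- Let n ≥ 2, α ∈ (1,2), ε ∈ (0,1) with α − 1 − 2ε^α ≥ 0, and let φ̃(x) = x₁^α − ε^α |x|^α on ℝⁿ. Then for every x ∈ ℝⁿ with x₁ > ε|x| > 0, one has ⟨∇φ̃(x), (D²φ̃(x) − α ε^α |x|^{α−2} Iₙ) ∇φ̃(x)⟩ ≥ α³ |x|^{3α−4} ε^{2α−2} · m(α, ε), where m(α, ε) = (α − 1 − 2ε^α)(1 − ε^α)² − 2ε^{α+2}(1 − ε²). -/

import Mathlib

open Real Set

/-- The weight `φ̃(x) = x₁^α - ε^α |x|^α`. -/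
noncomputable def phit {n : ℕ} [NeZero n] (α ε : ℝ)
    (x : EuclideanSpace ℝ (Fin n)) : ℝ :=
  x 0 ^ α - ε ^ α * ‖x‖ ^ α

/-- The Hessian matrix of `f` at `x`: `(i, j) ↦ ∂ᵢ∂ⱼ f (x)`. -/
noncomputable def hess {n : ℕ} (f : EuclideanSpace ℝ (Fin n) → ℝ)
    (x : EuclideanSpace ℝ (Fin n)) : Matrix (Fin n) (Fin n) ℝ :=
  Matrix.of fun i j =>
    fderiv ℝ (fun y => fderiv ℝ f y (EuclideanSpace.single j 1)) x
      (EuclideanSpace.single i 1)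

/-- The quantity `m(α, ε) = (α - 1 - 2ε^α)(1 - ε^α)² - 2ε^{α+2}(1 - ε²)`. -/
noncomputable def mfun (α ε : ℝ) : ℝ :=
  (α - 1 - 2 * ε ^ α) * (1 - ε ^ α) ^ 2 - 2 * ε ^ (α + 2) * (1 - ε ^ 2)

/-!
Write `t = x₁`, `r = |x|`, `e = e₁`. The gradient of `φ̃` is `A e - B x` and its Hessian is
`C e eᵀ - D x xᵀ - B Iₙ`, with `A = α t^{α-1}`, `B = α ε^α r^{α-2}`, `C = α(α-1) t^{α-2}`,
`D = α ε^α (α-2) r^{α-4}`. Since `|A e - B x|² = (A - B t)² + B² (r² - t²)`, the cubic form is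
`(C - 2B)(A - B t)² - D (A t - B r²)² - 2 B³ (r² - t²)`. The middle term is nonnegative as
`α < 2`; `C - 2B ≥ α (α - 1 - 2ε^α) r^{α-2}` as `t ≤ r`; and `A - B t` is at least its value at
`t = ε r`, because `s ↦ s^{α-1} - ε^α r^{α-2} s` increases on `[ε r, r]` when `ε^α ≤ α - 1`.
-/

open Filter Topology Matrix

theorem hasFDerivAt_norm_rpow_of_ne_zero {E : Type*} [NormedAddCommGroup E]
    [InnerProductSpace ℝ E] {x : E} (hx : x ≠ 0) (p : ℝ) :
    HasFDerivAt (fun y : E ↦ ‖y‖ ^ p) ((p * ‖x‖ ^ (p - 2)) • innerSL ℝ x) x := by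
  convert ((hasStrictFDerivAt_norm_sq x).rpow_const (p := p / 2) (by simp [hx])).hasFDerivAt
    using 1
  · ext y
    rw [← Real.rpow_natCast_mul (norm_nonneg y)]
    ring_nf
  · simp_rw [← Real.rpow_natCast_mul (norm_nonneg _), ← Nat.cast_smul_eq_nsmul ℝ, smul_smul]
    ring_nf

section

variable {n : ℕ}

local notation "E" => EuclideanSpace ℝ (Fin n)

theorem ne_zero_of_apply_pos {y : E} {i : Fin n} (hy : 0 < y i) : y ≠ 0 := by
  rintro rfl
  simp at hy

theorem hess_eq_of_hasGradientAt {f : E → ℝ} {G : E → E} {G' : E →L[ℝ] E} {x : E}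
    (hf : ∀ᶠ y in 𝓝 x, HasGradientAt f (G y) y) (hG : HasFDerivAt G G' x) :
    hess f x = Matrix.of fun i j => G' (EuclideanSpace.single i 1) j := by
  ext i j
  have hpartial : (fun y => fderiv ℝ f y (EuclideanSpace.single j 1)) =ᶠ[𝓝 x]
      fun y => EuclideanSpace.proj j (G y) := by
    filter_upwards [hf] with y hy
    simp [hy.hasFDerivAt.fderiv, EuclideanSpace.inner_single_right]
  have hGj : HasFDerivAt (fun y => EuclideanSpace.proj j (G y))
      ((EuclideanSpace.proj j).comp G') x :=
    (EuclideanSpace.proj (𝕜 := ℝ) j).hasFDerivAt.comp x hG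
  rw [hess, Matrix.of_apply, Matrix.of_apply, hpartial.fderiv_eq, hGj.fderiv]
  simp

end

section

variable {n : ℕ} [NeZero n]

local notation "E" => EuclideanSpace ℝ (Fin n)

noncomputable def phitGrad (α ε : ℝ) (y : E) : E :=
  (α * y 0 ^ (α - 1)) • EuclideanSpace.single 0 1 - (α * ε ^ α * ‖y‖ ^ (α - 2)) • y

theorem hasGradientAt_phit (α ε : ℝ) {y : E} (hy : 0 < y 0) :
    HasGradientAt (phit α ε) (phitGrad α ε y) y := by
  rw [hasGradientAt_iff_hasFDerivAt]
  have h₁ : HasFDerivAt (fun z : E => z 0 ^ α)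
      ((α * y 0 ^ (α - 1)) • EuclideanSpace.proj (𝕜 := ℝ) (0 : Fin n)) y := by
    simpa using (EuclideanSpace.proj (𝕜 := ℝ) (0 : Fin n)).hasFDerivAt.rpow_const
      (p := α) (Or.inl hy.ne')
  have h₂ := (hasFDerivAt_norm_rpow_of_ne_zero (ne_zero_of_apply_pos hy) α).const_mul (ε ^ α)
  refine (h₁.sub h₂).congr_fderiv ?_
  ext v
  simp [phitGrad, EuclideanSpace.inner_single_left]
  ring

theorem hess_phit (α ε : ℝ) {x : E} (hx : 0 < x 0) :
    hess (phit α ε) x =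
      (α * (α - 1) * x 0 ^ (α - 2)) • vecMulVec (Pi.single 0 1) (Pi.single 0 1) -
        (α * ε ^ α * (α - 2) * ‖x‖ ^ (α - 4)) • vecMulVec x.ofLp x.ofLp -
        (α * ε ^ α * ‖x‖ ^ (α - 2)) • (1 : Matrix (Fin n) (Fin n) ℝ) := by
  have h₁ := ((EuclideanSpace.proj (𝕜 := ℝ) (0 : Fin n)).hasFDerivAt.rpow_const
    (p := α - 1) (Or.inl hx.ne')).const_mul α
  have h₂ := (hasFDerivAt_norm_rpow_of_ne_zero (ne_zero_of_apply_pos hx) (α - 2)).const_mul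
    (α * ε ^ α)
  have hG : HasFDerivAt (phitGrad α ε) _ x :=
    (h₁.smul_const (EuclideanSpace.single 0 1)).sub (h₂.smul (hasFDerivAt_id x))
  have hgrad : ∀ᶠ y in 𝓝 x, HasGradientAt (phit α ε) (phitGrad α ε y) y := by
    filter_upwards [(isOpen_lt continuous_const
      (EuclideanSpace.proj (𝕜 := ℝ) (0 : Fin n)).continuous).mem_nhds hx] with y hy
    exact hasGradientAt_phit α ε hy
  rw [hess_eq_of_hasGradientAt hgrad hG]
  ext i j
  simp only [_root_.sub_apply, _root_.add_apply, _root_.smul_apply,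
    ContinuousLinearMap.smulRight_apply, ContinuousLinearMap.id_apply, innerSL_apply_apply,
    EuclideanSpace.inner_single_right, PiLp.proj_apply, PiLp.ofLp_single, WithLp.ofLp_sub,
    WithLp.ofLp_add, WithLp.ofLp_smul, Pi.sub_apply, Pi.add_apply, Pi.smul_apply, smul_eq_mul,
    Matrix.sub_apply, Matrix.smul_apply, vecMulVec_apply, Matrix.one_apply, Matrix.of_apply,
    Pi.single_apply]
  rw [show α - 1 - 1 = α - 2 by ring, show α - 2 - 2 = α - 4 by ring]
  simp only [@eq_comm _ (0 : Fin n) i, @eq_comm _ j i, conj_trivial]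
  split_ifs <;> ring

end

theorem dotProduct_mulVec_smul_vecMulVec_sub {ι R : Type*} [Fintype ι] [DecidableEq ι]
    [CommRing R] (a b c : R) (u v w : ι → R) :
    w ⬝ᵥ ((a • vecMulVec u u - b • vecMulVec v v - c • 1) *ᵥ w) =
      a * (u ⬝ᵥ w) ^ 2 - b * (v ⬝ᵥ w) ^ 2 - c * (w ⬝ᵥ w) := by
  rw [dotProduct_comm w]
  simp only [sub_mulVec, smul_mulVec, vecMulVec_mulVec, one_mulVec, op_smul_eq_smul,
    sub_dotProduct, smul_dotProduct, smul_eq_mul, dotProduct_comm u w, dotProduct_comm v w]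
  ring

theorem monotoneOn_rpow_sub_mul {p c a b : ℝ} (hp₀ : 0 ≤ p) (hp₁ : p ≤ 1) (ha : 0 < a)
    (hc : c ≤ p * b ^ (p - 1)) :
    MonotoneOn (fun s => s ^ p - c * s) (Icc a b) := by
  refine monotoneOn_of_hasDerivWithinAt_nonneg (f' := fun s => p * s ^ (p - 1) - c)
    (convex_Icc a b) ?_ ?_ ?_
  · exact (continuousOn_id.rpow_const fun s hs => Or.inl (ha.trans_le hs.1).ne').sub
      (continuousOn_const.mul continuousOn_id)
  · intro s hs
    rw [interior_Icc] at hs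
    have h : HasDerivAt (fun s => s ^ p - c * s) (p * s ^ (p - 1) - c * 1) s :=
      (hasDerivAt_rpow_const (Or.inl (ha.trans hs.1).ne')).sub ((hasDerivAt_id' s).const_mul c)
    simpa using h.hasDerivWithinAt
  · intro s hs
    rw [interior_Icc] at hs
    have : b ^ (p - 1) ≤ s ^ (p - 1) :=
      rpow_le_rpow_of_nonpos (ha.trans hs.1) hs.2.le (by linarith)
    nlinarith

theorem rpow_sub_mul_lower_bound {α ε r t : ℝ} (hα₁ : 1 ≤ α) (hα₂ : α ≤ 2) (hε : 0 < ε)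
    (hk : ε ^ α ≤ α - 1) (hr : 0 < r) (h₁ : ε * r ≤ t) (h₂ : t ≤ r) :
    ε ^ (α - 1) * r ^ (α - 1) * (1 - ε ^ 2) ≤ t ^ (α - 1) - ε ^ α * r ^ (α - 2) * t := by
  have hc : ε ^ α * r ^ (α - 2) ≤ (α - 1) * r ^ (α - 1 - 1) := by
    rw [show α - 1 - 1 = α - 2 by ring]
    exact mul_le_mul_of_nonneg_right hk (rpow_nonneg hr.le _)
  have hmono := monotoneOn_rpow_sub_mul (by linarith) (by linarith) (mul_pos hε hr) hc
  have hεr : ε * r ∈ Icc (ε * r) r := ⟨le_rfl, h₁.trans h₂⟩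
  have hε' : ε ^ α = ε ^ (α - 1) * ε := by
    rw [← rpow_add_one hε.ne', sub_add_cancel]
  have hr' : r ^ (α - 1) = r ^ (α - 2) * r := by
    rw [← rpow_add_one hr.ne']; ring_nf
  calc ε ^ (α - 1) * r ^ (α - 1) * (1 - ε ^ 2)
      = (ε * r) ^ (α - 1) - ε ^ α * r ^ (α - 2) * (ε * r) := by
        rw [mul_rpow hε.le hr.le, hε', hr']; ring
    _ ≤ t ^ (α - 1) - ε ^ α * r ^ (α - 2) * t := hmono hεr ⟨h₁, h₂⟩ h₁

-- `T`, `R`, `P` stand for `t^{α-2}`, `r^{α-2}`, `ε^{α-1}`.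
theorem cubic_lower_bound_of_bounds {α ε t r T R P : ℝ} (hα₂ : α < 2) (hε₀ : 0 < ε)
    (hr : 0 < r) (hP : 0 < P) (hR : 0 < R) (hRT : R ≤ T) (hcoef : 0 ≤ α - 1 - 2 * (P * ε))
    (hε₂ : ε ^ 2 ≤ P * ε) (h₁ : ε * r ≤ t)
    (hg : P * (R * r) * (1 - ε ^ 2) ≤ T * t - P * ε * R * t) :
    α ^ 3 * (R ^ 3 * r ^ 2) * P ^ 2 *
        ((α - 1 - 2 * (P * ε)) * (1 - P * ε) ^ 2 - 2 * (P * ε * ε ^ 2) * (1 - ε ^ 2)) ≤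
      (α * (α - 1) * T - 2 * (α * (P * ε) * R)) * (α * (T * t) - α * (P * ε) * R * t) ^ 2 -
        α * (P * ε) * (α - 2) * (R / r ^ 2) * (α * (T * t) * t - α * (P * ε) * R * r ^ 2) ^ 2 -
        2 * (α * (P * ε) * R) ^ 3 * (r ^ 2 - t ^ 2) := by
  have hPRr : 0 ≤ P * (R * r) := by positivity
  have hlead : (α - 1 - 2 * (P * ε)) * R ≤ (α - 1) * T - 2 * (P * ε) * R := by nlinarith
  have hgrad₀ : 0 ≤ P * (R * r) * (1 - P * ε) := by nlinarith
  have hgrad : P * (R * r) * (1 - P * ε) ≤ T * t - P * ε * R * t := by nlinarith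
  have hfirst := mul_le_mul hlead (pow_le_pow_left₀ hgrad₀ hgrad 2) (sq_nonneg _)
    (by nlinarith)
  have hmid : 0 ≤ P * ε * (2 - α) * (R / r ^ 2) * (T * t * t - P * ε * R * r ^ 2) ^ 2 := by
    have : 0 ≤ 2 - α := by linarith
    positivity
  have hlast : r ^ 2 - t ^ 2 ≤ r ^ 2 * (1 - ε ^ 2) := by nlinarith [mul_pos hε₀ hr]
  have hcube : 0 ≤ 2 * (P * ε) ^ 3 * R ^ 3 := by positivity
  have hα : 0 ≤ α ^ 3 := pow_nonneg (by nlinarith [mul_pos hP hε₀]) 3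
  nlinarith [mul_le_mul_of_nonneg_left hfirst hα, mul_nonneg hα hmid,
    mul_le_mul_of_nonneg_left (mul_le_mul_of_nonneg_left hlast hcube) hα]

theorem cubic_lower_bound_of_mem_cone {α ε t r : ℝ} (hα₁ : 1 < α) (hα₂ : α < 2)
    (hε₀ : 0 < ε) (hε₁ : ε < 1) (hcoef : 0 ≤ α - 1 - 2 * ε ^ α) (h₁ : ε * r < t) (h₂ : t ≤ r) :
    α ^ 3 * r ^ (3 * α - 4) * ε ^ (2 * α - 2) * mfun α ε ≤
      (α * (α - 1) * t ^ (α - 2) - 2 * (α * ε ^ α * r ^ (α - 2))) *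
          (α * t ^ (α - 1) - α * ε ^ α * r ^ (α - 2) * t) ^ 2 -
        α * ε ^ α * (α - 2) * r ^ (α - 4) *
          (α * t ^ (α - 1) * t - α * ε ^ α * r ^ (α - 2) * r ^ 2) ^ 2 -
        2 * (α * ε ^ α * r ^ (α - 2)) ^ 3 * (r ^ 2 - t ^ 2) := by
  have hr : 0 < r := by nlinarith
  have ht : 0 < t := (mul_pos hε₀ hr).trans h₁
  have hε₂ : ε ^ 2 ≤ ε ^ α := by
    simpa using rpow_le_rpow_of_exponent_ge hε₀ hε₁.le hα₂.le
  have hRT : r ^ (α - 2) ≤ t ^ (α - 2) := rpow_le_rpow_of_nonpos ht h₂ (by linarith)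
  have hg := rpow_sub_mul_lower_bound hα₁.le hα₂.le hε₀ (by linarith) hr h₁.le h₂
  have hK : ε ^ α = ε ^ (α - 1) * ε := by rw [← rpow_add_one hε₀.ne', sub_add_cancel]
  rw [show t ^ (α - 1) = t ^ (α - 2) * t by rw [← rpow_add_one ht.ne']; ring_nf] at hg ⊢
  rw [show r ^ (α - 1) = r ^ (α - 2) * r by rw [← rpow_add_one hr.ne']; ring_nf] at hg
  rw [show r ^ (α - 4) = r ^ (α - 2) / r ^ 2 by
      rw [← rpow_natCast, ← rpow_sub hr]; norm_num; ring_nf,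
    show r ^ (3 * α - 4) = (r ^ (α - 2)) ^ 3 * r ^ 2 by
      rw [← rpow_natCast, ← rpow_natCast, ← rpow_mul hr.le, ← rpow_add hr]; norm_num; ring_nf,
    show ε ^ (2 * α - 2) = (ε ^ (α - 1)) ^ 2 by
      rw [← rpow_natCast, ← rpow_mul hε₀.le]; norm_num; ring_nf,
    mfun, show ε ^ (α + 2) = ε ^ α * ε ^ 2 by rw [rpow_add hε₀]; norm_num]
  rw [hK] at hcoef hε₂ hg ⊢
  exact cubic_lower_bound_of_bounds hα₂ hε₀ hr (rpow_pos_of_pos hε₀ _) (rpow_pos_of_pos hr _)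
    hRT hcoef hε₂ h₁.le hg

theorem cubic_form_lower_bound_general (n : ℕ) [NeZero n] (α ε : ℝ)
    (hα : α ∈ Set.Ioo (1 : ℝ) 2) (hε : ε ∈ Set.Ioo (0 : ℝ) 1)
    (hcoef : 0 ≤ α - 1 - 2 * ε ^ α)
    (x : EuclideanSpace ℝ (Fin n)) (hx1 : ε * ‖x‖ < x 0) :
    α ^ 3 * ‖x‖ ^ (3 * α - 4) * ε ^ (2 * α - 2) * mfun α ε ≤
      dotProduct (fun i => gradient (phit α ε) x i)
        (Matrix.mulVec
          (hess (phit α ε) x -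
            (α * ε ^ α * ‖x‖ ^ (α - 2)) • (1 : Matrix (Fin n) (Fin n) ℝ))
          (fun i => gradient (phit α ε) x i)) := by
  obtain ⟨hα₁, hα₂⟩ := hα
  obtain ⟨hε₀, hε₁⟩ := hε
  have hx₀ : 0 < x 0 := (mul_nonneg hε₀.le (norm_nonneg x)).trans_lt hx1
  have hx₀r : x 0 ≤ ‖x‖ := (le_abs_self _).trans (by simpa using PiLp.norm_apply_le x 0)
  have hgrad : (fun i => gradient (phit α ε) x i) =
      (α * x 0 ^ (α - 1)) • Pi.single 0 1 - (α * ε ^ α * ‖x‖ ^ (α - 2)) • x.ofLp := by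
    rw [(hasGradientAt_phit α ε hx₀).gradient]
    simp only [phitGrad, WithLp.ofLp_sub, WithLp.ofLp_smul, PiLp.ofLp_single]
  have hxx : x.ofLp ⬝ᵥ x.ofLp = ‖x‖ ^ 2 := by
    rw [← real_inner_self_eq_norm_sq, EuclideanSpace.inner_eq_star_dotProduct]
    simp
  rw [hess_phit α ε hx₀, hgrad, sub_sub, ← add_smul, dotProduct_mulVec_smul_vecMulVec_sub]
  simp only [dotProduct_sub, sub_dotProduct, dotProduct_smul, smul_dotProduct,
    single_one_dotProduct, dotProduct_single_one, Pi.sub_apply, Pi.smul_apply, Pi.single_eq_same,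
    hxx, smul_eq_mul, mul_one]
  calc _ ≤ _ := cubic_lower_bound_of_mem_cone hα₁ hα₂ hε₀ hε₁ hcoef hx1 hx₀r
    _ = _ := by ring

/-- Positivity of the leading term of the Carleman commutator: for `x` in the
cone `x₁ > ε |x| > 0`,
`⟨∇φ̃, (D²φ̃ - α ε^α |x|^{α-2} Iₙ) ∇φ̃⟩ ≥ α³ |x|^{3α-4} ε^{2α-2} m(α, ε)`. -/
theorem cubic_form_lower_bound (n : ℕ) [NeZero n] (hn : 2 ≤ n) (α ε : ℝ)
    (hα : α ∈ Set.Ioo (1 : ℝ) 2) (hε : ε ∈ Set.Ioo (0 : ℝ) 1)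
    (hcoef : 0 ≤ α - 1 - 2 * ε ^ α)
    (x : EuclideanSpace ℝ (Fin n)) (hx1 : ε * ‖x‖ < x 0) (hx0 : 0 < ε * ‖x‖) :
    α ^ 3 * ‖x‖ ^ (3 * α - 4) * ε ^ (2 * α - 2) * mfun α ε ≤
      dotProduct (fun i => gradient (phit α ε) x i)
        (Matrix.mulVec
          (hess (phit α ε) x -
            (α * ε ^ α * ‖x‖ ^ (α - 2)) • (1 : Matrix (Fin n) (Fin n) ℝ))
          (fun i => gradient (phit α ε) x i)) :=
  cubic_form_lower_bound_general n α ε hα hε hcoef x hx1
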